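/- Let X¹, X² solve the sticky-particle Lagrangian flow X^ℓ(t) = Proj_K(X^ℓ₀ + t V^ℓ₀) in L²(0,1), with initial data X^ℓ₀ ∈ K ∩ L^p(0,1) and V^ℓ₀ ∈ L^p(0,1), 1 ≤ p ≤ ∞. Then for every t ≥ 0: ‖X¹(t) - X²(t)‖_{L^p(0,1)} ≤ ‖X¹₀ - X²₀‖_{L^p(0,1)} + t ‖V¹₀ - V²₀‖_{L^p(0,1)}. -/

import Mathlib

open MeasureTheory Set Filter

noncomputable section

/-- Lebesgue measure restricted to the interval (0,1). -/
def μ01 : MeasureTheory.Measure ℝ := MeasureTheory.volume.restrict (Set.Ioo 0 1)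

/-- The convex cone `K` of (essentially) nondecreasing functions in L²(0,1). -/
def coneK : Set (ℝ → ℝ) := {g | MonotoneOn g (Set.Ioo 0 1) ∧ MeasureTheory.MemLp g 2 μ01}

/-- `g` is the L²(0,1)-orthogonal projection of `f` onto the cone `K`,
characterized by the variational inequality `⟨f - g, z - g⟩ ≤ 0` for all `z ∈ K`. -/
def IsProjK (f g : ℝ → ℝ) : Prop :=
  g ∈ coneK ∧ ∀ z ∈ coneK, (∫ w in Set.Ioo (0:ℝ) 1, (f w - g w) * (z w - g w)) ≤ 0

/-- The convex envelope of `F` on `[0,1]`: the supremum of affine functions below `F` there. -/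
def convEnv (F : ℝ → ℝ) (w : ℝ) : ℝ :=
  sSup {y | ∃ a b : ℝ, y = a + b * w ∧ ∀ v ∈ Set.Icc (0:ℝ) 1, a + b * v ≤ F v}

/-- The open set `Ω_g ⊆ (0,1)` of points near which `g` is essentially constant. -/
def locConstSet (g : ℝ → ℝ) : Set ℝ :=
  {w | w ∈ Set.Ioo (0:ℝ) 1 ∧ ∃ a b c : ℝ, a < w ∧ w < b ∧
    ∀ᵐ x ∂μ01, x ∈ Set.Ioo a b → g x = c}

/-- The closed subspace `H_g` of L²(0,1) functions essentially constant on each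
open interval contained in `Ω_g`. -/
def Hspace (g : ℝ → ℝ) : Set (ℝ → ℝ) :=
  {u | MeasureTheory.MemLp u 2 μ01 ∧ ∀ a b : ℝ, Set.Ioo a b ⊆ locConstSet g →
    ∃ c : ℝ, ∀ᵐ x ∂μ01, x ∈ Set.Ioo a b → u x = c}

/-- `ξ` belongs to the subdifferential `∂I_K(g)` of the indicator function of `K` at `g ∈ K`. -/
def subdiffIK (g ξ : ℝ → ℝ) : Prop :=
  g ∈ coneK ∧ ∀ z ∈ coneK, (∫ w in Set.Ioo (0:ℝ) 1, ξ w * (z w - g w)) ≤ 0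

/-!
Write `u = X¹(t) - X²(t)` and `v = (X¹₀ + t V¹₀) - (X²₀ + t V²₀)`. The cone `K` is stable under
`g ↦ g + θ (h - g)` for `g h ∈ K` and every nondecreasing 1-Lipschitz `θ` with `θ 0 = 0`, so testing
the variational inequalities of the two projections with such perturbations and adding them gives
`∫ (u - v) θ(u) ≤ 0`. The truncations `θ = min (x - c)⁺ ε`, with `ε → 0`, turn this into
`∫ (|u| - c)⁺ ≤ ∫ (|v| - c)⁺` for all `c ≥ 0`. This controls every `L^p` norm: take `c = 0` for
`p = 1`, `c = ‖v‖_∞` for `p = ∞`, and for `1 < q < ∞` use the layer-cake identity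
`|a|^q = q (q - 1) ∫₀^∞ s^(q-2) (|a| - s)⁺ ds`. The triangle inequality in `L^p` then bounds
`‖v‖_p`.
-/

def IsMonotoneNormalContraction (θ : ℝ → ℝ) : Prop :=
  Monotone θ ∧ LipschitzWith 1 θ ∧ θ 0 = 0

namespace IsMonotoneNormalContraction

variable {θ : ℝ → ℝ}

lemma neg_comp_neg (hθ : IsMonotoneNormalContraction θ) :
    IsMonotoneNormalContraction fun x => -θ (-x) :=
  ⟨fun _ _ hxy => neg_le_neg (hθ.1 (neg_le_neg hxy)),
    by have h := (hθ.2.1.comp LipschitzWith.id.neg).neg; rwa [mul_one] at h, by simp [hθ.2.2]⟩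

lemma truncation {c ε : ℝ} (hc : 0 ≤ c) (hε : 0 ≤ ε) :
    IsMonotoneNormalContraction fun x => min (max (x - c) 0) ε := by
  have hsub : LipschitzWith 1 fun x : ℝ => x - c := by
    simpa using LipschitzWith.id.sub (LipschitzWith.const c)
  refine ⟨fun x y hxy => ?_, (hsub.max_const 0).min_const ε, ?_⟩
  · dsimp only
    gcongr
  · simp [hc, hε]

lemma monotone_add_comp_sub (hθ : IsMonotoneNormalContraction θ) (y : ℝ) :
    Monotone fun x => x + θ (y - x) := by
  intro x x' hxx'
  have h := hθ.2.1.dist_le_mul (y - x) (y - x')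
  rw [NNReal.coe_one, one_mul, Real.dist_eq, Real.dist_eq, sub_sub_sub_cancel_left,
    abs_of_nonneg (sub_nonneg.2 hxx')] at h
  dsimp only
  linarith [le_abs_self (θ (y - x) - θ (y - x'))]

end IsMonotoneNormalContraction

lemma add_comp_sub_mem_coneK {a b : ℝ → ℝ} (ha : a ∈ coneK) (hb : b ∈ coneK) {θ : ℝ → ℝ}
    (hθ : IsMonotoneNormalContraction θ) : (fun w => a w + θ (b w - a w)) ∈ coneK := by
  refine ⟨fun w hw w' hw' hww' => ?_, ha.2.add (hθ.2.1.comp_memLp hθ.2.2 (hb.2.sub ha.2))⟩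
  calc a w + θ (b w - a w) ≤ a w + θ (b w' - a w) := by
        gcongr; exact hθ.1 (by gcongr; exact hb.1 hw hw' hww')
    _ ≤ a w' + θ (b w' - a w') := hθ.monotone_add_comp_sub (b w') (ha.1 hw hw' hww')

-- The pairing inequality by which Bénilan and Crandall characterise complete accretivity.
def CompletelyDominated {α : Type*} [MeasurableSpace α] (μ : Measure α) (u v : α → ℝ) : Prop :=
  ∀ θ, IsMonotoneNormalContraction θ → ∫ x, (u x - v x) * θ (u x) ∂μ ≤ 0

namespace IsProjK

variable {f g f₁ g₁ f₂ g₂ θ : ℝ → ℝ}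

lemma integral_mul_comp_sub_nonpos (h : IsProjK f g) {b : ℝ → ℝ} (hb : b ∈ coneK)
    (hθ : IsMonotoneNormalContraction θ) :
    ∫ w, (f w - g w) * θ (b w - g w) ∂μ01 ≤ 0 := by
  have h' := h.2 _ (add_comp_sub_mem_coneK h.1 hb hθ)
  simp only [add_sub_cancel_left] at h'
  exact h'

lemma completelyDominated (h₁ : IsProjK f₁ g₁) (h₂ : IsProjK f₂ g₂) (hf₁ : MemLp f₁ 2 μ01)
    (hf₂ : MemLp f₂ 2 μ01) :
    CompletelyDominated μ01 (fun w => g₁ w - g₂ w) (fun w => f₁ w - f₂ w) := by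
  intro θ hθ
  have hθu : MemLp (fun w => θ (g₁ w - g₂ w)) 2 μ01 :=
    hθ.2.1.comp_memLp hθ.2.2 (h₁.1.2.sub h₂.1.2)
  have hint₁ : Integrable (fun w => (f₁ w - g₁ w) * -θ (g₁ w - g₂ w)) μ01 :=
    (hf₁.sub h₁.1.2).integrable_mul hθu.neg
  have hint₂ : Integrable (fun w => (f₂ w - g₂ w) * θ (g₁ w - g₂ w)) μ01 :=
    (hf₂.sub h₂.1.2).integrable_mul hθu
  have hVI₁ := h₁.integral_mul_comp_sub_nonpos h₂.1 hθ.neg_comp_neg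
  have hVI₂ := h₂.integral_mul_comp_sub_nonpos h₁.1 hθ
  simp only [neg_sub] at hVI₁
  calc ∫ w, (g₁ w - g₂ w - (f₁ w - f₂ w)) * θ (g₁ w - g₂ w) ∂μ01
      = ∫ w, (f₂ w - g₂ w) * θ (g₁ w - g₂ w) ∂μ01
          + ∫ w, (f₁ w - g₁ w) * -θ (g₁ w - g₂ w) ∂μ01 := by
        rw [← integral_add hint₂ hint₁]
        congr 1 with w
        ring
    _ ≤ 0 := add_nonpos hVI₂ hVI₁

end IsProjK

lemma integral_rpow_mul_sub {q A : ℝ} (hq : 1 < q) (hA : 0 ≤ A) :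
    ∫ s in (0 : ℝ)..A, s ^ (q - 2) * (A - s) = A ^ q / (q * (q - 1)) := by
  have hq₁ : q - 1 ≠ 0 := by linarith
  have hq₀ : q ≠ 0 := by linarith
  have hpow : ∀ {s : ℝ}, 0 ≤ s → s ^ (q - 1) = s ^ (q - 2) * s := fun hs => by
    rw [← Real.rpow_add_one' hs (by linarith)]
    ring_nf
  have hi₂ : IntervalIntegrable (fun s : ℝ => s ^ (q - 2)) volume 0 A :=
    intervalIntegral.intervalIntegrable_rpow' (by linarith)
  have hi₁ : IntervalIntegrable (fun s : ℝ => s ^ (q - 1)) volume 0 A :=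
    intervalIntegral.intervalIntegrable_rpow' (by linarith)
  calc ∫ s in (0 : ℝ)..A, s ^ (q - 2) * (A - s)
      = ∫ s in (0 : ℝ)..A, (A * s ^ (q - 2) - s ^ (q - 1)) := by
        refine intervalIntegral.integral_congr fun s hs => ?_
        rw [uIcc_of_le hA] at hs
        simp only [hpow hs.1]
        ring
    _ = A * (A ^ (q - 1) / (q - 1)) - A ^ q / q := by
        rw [intervalIntegral.integral_sub (hi₂.const_mul A) hi₁,
          intervalIntegral.integral_const_mul,
          integral_rpow (Or.inl (by linarith)), integral_rpow (Or.inl (by linarith)),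
          show q - 2 + 1 = q - 1 by ring, show q - 1 + 1 = q by ring,
          Real.zero_rpow hq₁, Real.zero_rpow hq₀, sub_zero, sub_zero]
    _ = A ^ q / (q * (q - 1)) := by
        rw [show A ^ q = A ^ (q - 1) * A by rw [← Real.rpow_add_one' hA (by simpa)]; ring_nf]
        field_simp
        ring

lemma lintegral_rpow_mul_max_sub {q A : ℝ} (hq : 1 < q) (hA : 0 ≤ A) :
    ∫⁻ s in Ioi 0, ENNReal.ofReal (s ^ (q - 2) * max (A - s) 0) =
      ENNReal.ofReal (A ^ q / (q * (q - 1))) := by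
  have hzero : ∫⁻ s in Ioi A, ENNReal.ofReal (s ^ (q - 2) * max (A - s) 0) = 0 := by
    refine (setLIntegral_congr_fun measurableSet_Ioi fun s hs => ?_).trans lintegral_zero
    simp [max_eq_right (sub_nonpos.2 (mem_Ioi.1 hs).le)]
  have hIoc : ∫⁻ s in Ioc 0 A, ENNReal.ofReal (s ^ (q - 2) * max (A - s) 0) =
      ∫⁻ s in Ioc 0 A, ENNReal.ofReal (s ^ (q - 2) * (A - s)) :=
    setLIntegral_congr_fun measurableSet_Ioc fun s hs => by
      rw [max_eq_left (sub_nonneg.2 hs.2)]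
  rw [← Ioc_union_Ioi_eq_Ioi hA, lintegral_union measurableSet_Ioi (Ioc_disjoint_Ioi le_rfl),
    hzero, add_zero, hIoc, ← integral_rpow_mul_sub hq hA, intervalIntegral.integral_of_le hA,
    ofReal_integral_eq_lintegral_ofReal]
  · exact ((intervalIntegral.intervalIntegrable_rpow' (by linarith)).mul_continuousOn
      (continuousOn_const.sub continuousOn_id)).1
  · exact (ae_restrict_iff' measurableSet_Ioc).2 (ae_of_all _ fun s hs =>
      mul_nonneg (Real.rpow_nonneg hs.1.le _) (sub_nonneg.2 hs.2))

section

variable {α : Type*} [MeasurableSpace α] {μ : Measure α} {u v : α → ℝ}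

lemma enorm_rpow_eq_lintegral {q : ℝ} (hq : 1 < q) (a : ℝ) :
    ‖a‖ₑ ^ q = ENNReal.ofReal (q * (q - 1)) *
      ∫⁻ s in Ioi 0, ENNReal.ofReal (s ^ (q - 2) * max (|a| - s) 0) := by
  have hqq : 0 < q * (q - 1) := mul_pos (by linarith) (by linarith)
  rw [lintegral_rpow_mul_max_sub hq (abs_nonneg a), ← ENNReal.ofReal_mul hqq.le,
    mul_div_cancel₀ _ hqq.ne', Real.enorm_eq_ofReal_abs,
    ENNReal.ofReal_rpow_of_nonneg (abs_nonneg a) (by linarith)]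

lemma lintegral_enorm_rpow_eq [SFinite μ] {q : ℝ} (hq : 1 < q) (hu : AEMeasurable u μ) :
    ∫⁻ x, ‖u x‖ₑ ^ q ∂μ = ENNReal.ofReal (q * (q - 1)) *
      ∫⁻ s in Ioi 0,
        ENNReal.ofReal (s ^ (q - 2)) * ∫⁻ x, ENNReal.ofReal (max (|u x| - s) 0) ∂μ := by
  simp_rw [enorm_rpow_eq_lintegral hq]
  rw [lintegral_const_mul' _ _ ENNReal.ofReal_ne_top, lintegral_lintegral_swap (by fun_prop)]
  congr 1
  refine setLIntegral_congr_fun measurableSet_Ioi fun s hs => ?_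
  simp_rw [ENNReal.ofReal_mul (Real.rpow_nonneg (le_of_lt hs) _)]
  exact lintegral_const_mul' _ _ ENNReal.ofReal_ne_top

lemma eLpNormEssSup_le_of_lintegral_max_abs_sub_le (hu : AEMeasurable u μ)
    (h : ∀ c, 0 ≤ c → ∫⁻ x, ENNReal.ofReal (max (|u x| - c) 0) ∂μ ≤
      ∫⁻ x, ENNReal.ofReal (max (|v x| - c) 0) ∂μ) :
    eLpNormEssSup u μ ≤ eLpNormEssSup v μ := by
  rcases eq_or_ne (eLpNormEssSup v μ) ⊤ with hM | hM
  · exact hM ▸ le_top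
  set M := (eLpNormEssSup v μ).toReal
  have hvM : ∀ᵐ x ∂μ, |v x| ≤ M := by
    filter_upwards [ae_le_eLpNormEssSup (f := v) (μ := μ)] with x hx
    simpa [M] using ENNReal.toReal_mono hM hx
  have hv0 : ∫⁻ x, ENNReal.ofReal (max (|v x| - M) 0) ∂μ = 0 :=
    lintegral_eq_zero_of_ae_eq_zero (by
      filter_upwards [hvM] with x hx
      simp [max_eq_right (sub_nonpos.2 hx)])
  have hu0 := (lintegral_eq_zero_iff' (by fun_prop)).1
    (le_antisymm ((h M ENNReal.toReal_nonneg).trans hv0.le) zero_le)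
  calc eLpNormEssSup u μ ≤ ENNReal.ofReal M := eLpNormEssSup_le_of_ae_bound (by
        filter_upwards [hu0] with x hx
        simpa using hx)
    _ = eLpNormEssSup v μ := ENNReal.ofReal_toReal hM

lemma eLpNorm_le_of_lintegral_max_abs_sub_le [SFinite μ] (hu : AEMeasurable u μ)
    (hv : AEMeasurable v μ)
    (h : ∀ c, 0 ≤ c → ∫⁻ x, ENNReal.ofReal (max (|u x| - c) 0) ∂μ ≤
      ∫⁻ x, ENNReal.ofReal (max (|v x| - c) 0) ∂μ) {p : ENNReal} (hp : 1 ≤ p) :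
    eLpNorm u p μ ≤ eLpNorm v p μ := by
  rcases eq_or_ne p ⊤ with rfl | hp_top
  · simpa using eLpNormEssSup_le_of_lintegral_max_abs_sub_le hu h
  rcases eq_or_ne p 1 with rfl | hp_one
  · simpa [eLpNorm_one_eq_lintegral_enorm, Real.enorm_eq_ofReal_abs] using h 0 le_rfl
  have hq : 1 < p.toReal := by
    simpa using ENNReal.toReal_strict_mono hp_top (lt_of_le_of_ne hp (Ne.symm hp_one))
  rw [eLpNorm_eq_lintegral_rpow_enorm_toReal (by positivity) hp_top,
    eLpNorm_eq_lintegral_rpow_enorm_toReal (by positivity) hp_top,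
    lintegral_enorm_rpow_eq hq hu, lintegral_enorm_rpow_eq hq hv]
  refine ENNReal.rpow_le_rpow (mul_le_mul_right (setLIntegral_mono' measurableSet_Ioi
    fun s hs => mul_le_mul_right (h s (le_of_lt hs)) _) _) (by positivity)

end

lemma mul_max_sub_le (x y c : ℝ) {ε : ℝ} (hε : 0 ≤ ε) :
    ε * max (x - c) 0 ≤ (x - y) * min (max (x - c) 0) ε + ε * max (y - c) 0 + ε ^ 2 := by
  rcases le_total (x - c) 0 with hx | hx <;> rcases le_total (y - c) 0 with hy | hy <;>
    rcases le_total (x - c) ε with hxε | hxε <;>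
    simp only [max_eq_left, max_eq_right, min_eq_left, min_eq_right, hx, hy, hxε, hε] <;>
    nlinarith

lemma max_abs_sub_eq (x : ℝ) {c : ℝ} (hc : 0 ≤ c) :
    max (|x| - c) 0 = max (x - c) 0 + max (-x - c) 0 := by
  rcases le_total x 0 with hx | hx
  · rw [abs_of_nonpos hx, max_eq_right (by linarith : x - c ≤ 0), zero_add]
  · rw [abs_of_nonneg hx, max_eq_right (by linarith : -x - c ≤ 0), add_zero]

lemma MeasureTheory.Integrable.max_sub_zero {α : Type*} [MeasurableSpace α] {μ : Measure α}
    [IsFiniteMeasure μ] {w : α → ℝ} (hw : Integrable w μ) (c : ℝ) :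
    Integrable (fun x => max (w x - c) 0) μ :=
  (hw.sub (integrable_const c)).pos_part

namespace CompletelyDominated

variable {α : Type*} [MeasurableSpace α] {μ : Measure α} {u v : α → ℝ}

lemma neg (h : CompletelyDominated μ u v) :
    CompletelyDominated μ (fun x => -u x) fun x => -v x := by
  intro θ hθ
  calc ∫ x, (-u x - -v x) * θ (-u x) ∂μ = ∫ x, (u x - v x) * -θ (-u x) ∂μ := by
        congr 1 with x
        ring
    _ ≤ 0 := h _ hθ.neg_comp_neg

variable [IsFiniteMeasure μ]

lemma integral_max_sub_le (h : CompletelyDominated μ u v) (hu : Integrable u μ)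
    (hv : Integrable v μ) {c : ℝ} (hc : 0 ≤ c) :
    ∫ x, max (u x - c) 0 ∂μ ≤ ∫ x, max (v x - c) 0 ∂μ := by
  have hu' := hu.max_sub_zero c
  have hv' := hv.max_sub_zero c
  have hμ := measureReal_nonneg (μ := μ) (s := univ)
  -- Testing `h` with the truncation at height `ε` and dividing by `ε` loses `ε * μ univ`.
  have hε : ∀ ε > 0, ∫ x, max (u x - c) 0 ∂μ ≤ ∫ x, max (v x - c) 0 ∂μ + ε * μ.real univ := by
    intro ε hε
    have hθ := IsMonotoneNormalContraction.truncation hc hε.le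
    have hint : Integrable (fun x => (u x - v x) * min (max (u x - c) 0) ε) μ :=
      (hu.sub hv).mul_bdd (hθ.2.1.continuous.comp_aestronglyMeasurable hu.1) (c := ε)
        (ae_of_all _ fun x => by
          rw [Real.norm_eq_abs, abs_of_nonneg (le_min (le_max_right _ _) hε.le)]
          exact min_le_right _ _)
    have hsum : Integrable (fun x => (u x - v x) * min (max (u x - c) 0) ε
        + ε * max (v x - c) 0) μ := hint.add (hv'.const_mul ε)
    have hmain : ε * ∫ x, max (u x - c) 0 ∂μ ≤
        ∫ x, (u x - v x) * min (max (u x - c) 0) ε ∂μ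
          + ε * ∫ x, max (v x - c) 0 ∂μ + ε ^ 2 * μ.real univ := by
      calc ε * ∫ x, max (u x - c) 0 ∂μ = ∫ x, ε * max (u x - c) 0 ∂μ :=
            (integral_const_mul _ _).symm
        _ ≤ ∫ x, ((u x - v x) * min (max (u x - c) 0) ε + ε * max (v x - c) 0 + ε ^ 2) ∂μ :=
            integral_mono (hu'.const_mul ε) (hsum.add (integrable_const _))
              fun x => mul_max_sub_le (u x) (v x) c hε.le
        _ = _ := by
            rw [integral_add hsum (integrable_const _),
              integral_add hint (hv'.const_mul ε), integral_const_mul, integral_const, smul_eq_mul,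
              mul_comm (μ.real univ)]
    have hθu := h _ hθ
    nlinarith
  refine le_of_forall_pos_le_add fun δ hδ => (hε (δ / (μ.real univ + 1)) (by positivity)).trans ?_
  gcongr
  rw [div_mul_eq_mul_div, div_le_iff₀ (by positivity)]
  nlinarith

lemma lintegral_max_abs_sub_le (h : CompletelyDominated μ u v) (hu : Integrable u μ)
    (hv : Integrable v μ) {c : ℝ} (hc : 0 ≤ c) :
    ∫⁻ x, ENNReal.ofReal (max (|u x| - c) 0) ∂μ ≤ ∫⁻ x, ENNReal.ofReal (max (|v x| - c) 0) ∂μ := by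
  have integral_eq : ∀ {w : α → ℝ}, Integrable w μ → ∫ x, max (|w x| - c) 0 ∂μ =
      ∫ x, max (w x - c) 0 ∂μ + ∫ x, max (-w x - c) 0 ∂μ := fun hw => by
    simp only [max_abs_sub_eq _ hc]
    exact integral_add (hw.max_sub_zero c) (hw.neg.max_sub_zero c)
  rw [← ofReal_integral_eq_lintegral_ofReal (hu.abs.max_sub_zero c)
      (ae_of_all _ fun _ => le_max_right _ _),
    ← ofReal_integral_eq_lintegral_ofReal (hv.abs.max_sub_zero c)
      (ae_of_all _ fun _ => le_max_right _ _),
    integral_eq hu, integral_eq hv]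
  exact ENNReal.ofReal_le_ofReal (add_le_add (h.integral_max_sub_le hu hv hc)
    (h.neg.integral_max_sub_le hu.neg hv.neg hc))

lemma eLpNorm_le (h : CompletelyDominated μ u v) (hu : Integrable u μ)
    (hv : Integrable v μ) {p : ENNReal} (hp : 1 ≤ p) : eLpNorm u p μ ≤ eLpNorm v p μ :=
  eLpNorm_le_of_lintegral_max_abs_sub_le hu.1.aemeasurable hv.1.aemeasurable
    (fun _ hc => h.lintegral_max_abs_sub_le hu hv hc) hp

end CompletelyDominated

instance : IsFiniteMeasure μ01 := ⟨by simp [μ01]⟩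

theorem stmt17_general (p : ENNReal) (hp : 1 ≤ p)
    (X₁ X₂ : ℝ → ℝ → ℝ) (X₀₁ X₀₂ V₀₁ V₀₂ : ℝ → ℝ)
    (hK₁ : X₀₁ ∈ coneK) (hK₂ : X₀₂ ∈ coneK)
    (hV₁ : MeasureTheory.MemLp V₀₁ 2 μ01) (hV₂ : MeasureTheory.MemLp V₀₂ 2 μ01)
    (hflow₁ : ∀ t : ℝ, 0 ≤ t → IsProjK (fun w => X₀₁ w + t * V₀₁ w) (X₁ t))
    (hflow₂ : ∀ t : ℝ, 0 ≤ t → IsProjK (fun w => X₀₂ w + t * V₀₂ w) (X₂ t)) :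
    ∀ t : ℝ, 0 ≤ t →
      MeasureTheory.eLpNorm (fun w => X₁ t w - X₂ t w) p μ01 ≤
        MeasureTheory.eLpNorm (fun w => X₀₁ w - X₀₂ w) p μ01 +
          ENNReal.ofReal t * MeasureTheory.eLpNorm (fun w => V₀₁ w - V₀₂ w) p μ01 := by
  intro t ht
  have hf₁ : MemLp (fun w => X₀₁ w + t * V₀₁ w) 2 μ01 := hK₁.2.add (hV₁.const_mul t)
  have hf₂ : MemLp (fun w => X₀₂ w + t * V₀₂ w) 2 μ01 := hK₂.2.add (hV₂.const_mul t)
  have hdom := (hflow₁ t ht).completelyDominated (hflow₂ t ht) hf₁ hf₂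
  calc eLpNorm (fun w => X₁ t w - X₂ t w) p μ01
      ≤ eLpNorm (fun w => (X₀₁ w + t * V₀₁ w) - (X₀₂ w + t * V₀₂ w)) p μ01 :=
        hdom.eLpNorm_le (((hflow₁ t ht).1.2.sub (hflow₂ t ht).1.2).integrable one_le_two)
          ((hf₁.sub hf₂).integrable one_le_two) hp
    _ = eLpNorm ((fun w => X₀₁ w - X₀₂ w) + t • fun w => V₀₁ w - V₀₂ w) p μ01 := by
        congr 1 with w
        simp only [Pi.add_apply, Pi.smul_apply, smul_eq_mul]
        ring
    _ ≤ eLpNorm (fun w => X₀₁ w - X₀₂ w) p μ01 + eLpNorm (t • fun w => V₀₁ w - V₀₂ w) p μ01 :=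
        eLpNorm_add_le (hK₁.2.sub hK₂.2).1 ((hV₁.sub hV₂).const_smul t).1 hp
    _ = _ := by rw [eLpNorm_const_smul, Real.enorm_eq_ofReal ht]

theorem stmt17 (p : ENNReal) (hp : 1 ≤ p)
    (X₁ X₂ : ℝ → ℝ → ℝ) (X₀₁ X₀₂ V₀₁ V₀₂ : ℝ → ℝ)
    (hK₁ : X₀₁ ∈ coneK) (hK₂ : X₀₂ ∈ coneK)
    (hV₁ : MeasureTheory.MemLp V₀₁ 2 μ01) (hV₂ : MeasureTheory.MemLp V₀₂ 2 μ01)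
    (hXp₁ : MeasureTheory.MemLp X₀₁ p μ01) (hXp₂ : MeasureTheory.MemLp X₀₂ p μ01)
    (hVp₁ : MeasureTheory.MemLp V₀₁ p μ01) (hVp₂ : MeasureTheory.MemLp V₀₂ p μ01)
    (hflow₁ : ∀ t : ℝ, 0 ≤ t → IsProjK (fun w => X₀₁ w + t * V₀₁ w) (X₁ t))
    (hflow₂ : ∀ t : ℝ, 0 ≤ t → IsProjK (fun w => X₀₂ w + t * V₀₂ w) (X₂ t)) :
    ∀ t : ℝ, 0 ≤ t →
      MeasureTheory.eLpNorm (fun w => X₁ t w - X₂ t w) p μ01 ≤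
        MeasureTheory.eLpNorm (fun w => X₀₁ w - X₀₂ w) p μ01 +
          ENNReal.ofReal t * MeasureTheory.eLpNorm (fun w => V₀₁ w - V₀₂ w) p μ01 :=
  stmt17_general p hp X₁ X₂ X₀₁ X₀₂ V₀₁ V₀₂ hK₁ hK₂ hV₁ hV₂ hflow₁ hflow₂
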